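/- Well-posedness of the fixed-point iteration (Lemma 6.3): Let τ > 0, let (ρ_h^{n−1}, m_h^{n−1}) ∈ Q_h × V_h and (ρ̃_h, m̃_h) ∈ Q_h × V_h be given with ρ_h^{n−1} > 0 and ρ̃_h > 0. Then the linear system of the fixed-point iteration has a unique solution (ρ_h, m_h) ∈ Q_h × V_h. -/

import Mathlib

/-- The network pairing `(u, w)_E = Σ_{e∈E} ∫_0^{ℓ_e} u_e w_e dx` of two families of
functions on the edges of a pipe network. -/
noncomputable def pairE {E : Type} [Fintype E] (ℓ : E → ℝ) (u w : E → ℝ → ℝ) : ℝ :=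
  ∑ e, ∫ x in (0 : ℝ)..(ℓ e), u e x * w e x

/-- `q` is piecewise constant on the uniform mesh of `[0, ℓ e]` into `N e` subintervals,
for every edge `e`.  This is the space `Q_h` of the mixed finite element method
(the value at the right endpoint `ℓ e` is irrelevant). -/
def IsPwConst {E : Type} (N : E → ℕ) (ℓ : E → ℝ) (q : E → ℝ → ℝ) : Prop :=
  ∀ e, ∀ i : ℕ, i < N e →
    ∀ x ∈ Set.Ico ((i : ℝ) * ℓ e / (N e : ℝ)) (((i : ℝ) + 1) * ℓ e / (N e : ℝ)),
      q e x = q e ((i : ℝ) * ℓ e / (N e : ℝ))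

/-- `v` is continuous on `[0, ℓ e]` and affine on each subinterval of the uniform mesh
of `[0, ℓ e]` into `N e` subintervals, for every edge `e`. -/
def IsPwAffine {E : Type} (N : E → ℕ) (ℓ : E → ℝ) (v : E → ℝ → ℝ) : Prop :=
  (∀ e, ContinuousOn (v e) (Set.Icc 0 (ℓ e))) ∧
  (∀ e, ∀ i : ℕ, i < N e → ∃ α β : ℝ,
    ∀ x ∈ Set.Icc ((i : ℝ) * ℓ e / (N e : ℝ)) (((i : ℝ) + 1) * ℓ e / (N e : ℝ)),
      v e x = α * x + β)

/-- The vertex sum `Σ_{e∈E(w)} f_e(w) n_e(w)` at a vertex `w`, where `n_e(w) = -1` if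
`w` is the initial vertex `src e`, `n_e(w) = +1` if `w` is the terminal vertex `dst e`,
and a function `f_e` is evaluated at `src e` as `f e 0` and at `dst e` as `f e (ℓ e)`. -/
noncomputable def vtxSum {V E : Type} [Fintype E] [DecidableEq V]
    (src dst : E → V) (ℓ : E → ℝ) (f : E → ℝ → ℝ) (w : V) : ℝ :=
  ∑ e, ((if dst e = w then f e (ℓ e) else 0) - (if src e = w then f e 0 else 0))

/-- The space `V_h`: continuous piecewise affine families that satisfy the conservative
coupling condition `Σ_{e∈E(w)} v_e(w) n_e(w) = 0` at every vertex `w`. -/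
def InVh {V E : Type} [Fintype E] [DecidableEq V]
    (src dst : E → V) (N : E → ℕ) (ℓ : E → ℝ) (v : E → ℝ → ℝ) : Prop :=
  IsPwAffine N ℓ v ∧ ∀ w : V, vtxSum src dst ℓ v w = 0

/-- The subinterval-wise (broken) spatial derivative of a piecewise affine family `v`:
on the subinterval of the mesh containing `x`, it is the slope of `v e` there. -/
noncomputable def Dx {E : Type} (N : E → ℕ) (ℓ : E → ℝ) (v : E → ℝ → ℝ)
    (e : E) (x : ℝ) : ℝ :=
  let i : ℕ := min (N e - 1) ⌊x * (N e : ℝ) / ℓ e⌋₊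
  (v e (((i : ℝ) + 1) * ℓ e / (N e : ℝ)) - v e ((i : ℝ) * ℓ e / (N e : ℝ)))
    * ((N e : ℝ) / ℓ e)

/-- The linear system of the fixed-point iteration (Problem 6.1) for a single time step,
with data `(ρp, mp)` (the previous time step), time step `τ` and linearization point
`(ρl, ml)` (denoted `(ρ̃_h, m̃_h)` in the paper), determining `(ρ, m) ∈ Q_h × V_h`:
for all `q_h ∈ Q_h` and all `v_h ∈ V_h`,
`(1/τ)(ρ_h, q_h)_E + (∂ₓ m_h, q_h)_E = (1/τ)(ρⁿ⁻¹, q_h)_E` and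
`(1/τ)((1/ρⁿ⁻¹) m_h, v_h)_E
  - ( (m̃/(2ρ̃²)) m_h + (P'(ρ̃)/ρ̃) ρ_h - (a/ρ̃²) ∂ₓ m_h, ∂ₓ v_h )_E
  + ( (m̃/(2ρ̃²)) ∂ₓ m_h + (b |m̃|/ρ̃²) m_h, v_h )_E
  = (1/τ)( (1/ρⁿ⁻¹) mⁿ⁻¹ + (m̃/(2ρ̃²))(ρ̃ - ρⁿ⁻¹), v_h )_E`,
with `P_e'(ρ) = c_e γ/(γ-1) ρ^(γ-1)` on edge `e`. -/
def FixedPtLin {V E : Type} [Fintype V] [Fintype E] [DecidableEq V]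
    (src dst : E → V) (N : E → ℕ) (ℓ : E → ℝ) (γ : ℝ) (a b c : E → ℝ)
    (τ : ℝ) (ρp mp ρl ml ρ m : E → ℝ → ℝ) : Prop :=
  (∀ q : E → ℝ → ℝ, IsPwConst N ℓ q →
      (1 / τ) * pairE ℓ ρ q + pairE ℓ (Dx N ℓ m) q = (1 / τ) * pairE ℓ ρp q) ∧
  (∀ v : E → ℝ → ℝ, InVh src dst N ℓ v →
      (1 / τ) * pairE ℓ (fun e x => (1 / ρp e x) * m e x) v
        - pairE ℓ (fun e x => ml e x / (2 * ρl e x ^ 2) * m e x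
            + (c e * γ / (γ - 1) * ρl e x ^ (γ - 1) / ρl e x) * ρ e x
            - a e / ρl e x ^ 2 * Dx N ℓ m e x) (Dx N ℓ v)
        + pairE ℓ (fun e x => ml e x / (2 * ρl e x ^ 2) * Dx N ℓ m e x
            + b e * |ml e x| / ρl e x ^ 2 * m e x) v
      = (1 / τ) * pairE ℓ (fun e x => (1 / ρp e x) * mp e x
            + ml e x / (2 * ρl e x ^ 2) * (ρl e x - ρp e x)) v)

/-!
Testing the mass equation with its own residual `ρ - (ρⁿ⁻¹ - τ ∂ₓm)`, which lies in `Q_h`, shows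
that it holds exactly when `ρ = ρⁿ⁻¹ - τ ∂ₓm` cellwise. Substituting this into the momentum
equation leaves a problem for `m` alone: `B(m, v) = F(v)` for all `v ∈ V_h`, where
`B(u, v) = (w₀ u + w₁ ∂ₓu, v)_E + (w₂ ∂ₓu - w₁ u, ∂ₓv)_E` with `w₀ = 1/(τ ρⁿ⁻¹) + b|m̃|/ρ̃² > 0`,
`w₁ = m̃/(2ρ̃²)` and `w₂ = a/ρ̃² + τ P'(ρ̃)/ρ̃ ≥ 0`. The `w₁`-part is skew, so
`B(v, v) = (w₀ v, v)_E + (w₂ ∂ₓv, ∂ₓv)_E` vanishes only for `v = 0`. On the finite-dimensional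
space of nodal values such a form identifies the space with its dual, so the reduced problem,
and with it the linear system, has exactly one solution.
-/

noncomputable section

namespace PipeNetwork

open MeasureTheory Set intervalIntegral

section Mesh

variable {n : ℕ} {L : ℝ}

/-- The real index `t` makes `node n L (i + 1)` unfold to the `((i : ℝ) + 1) * ℓ e / N e` of
`IsPwConst`, `IsPwAffine` and `Dx`. -/
def node (n : ℕ) (L t : ℝ) : ℝ := t * L / n

/-- The cell index used by `Dx`; the clamp puts `x = L` into the last cell. -/
def cellIndex (n : ℕ) (L x : ℝ) : ℕ := min (n - 1) ⌊x * n / L⌋₊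

@[simp] lemma node_zero : node n L 0 = 0 := by simp [node]

@[simp] lemma node_natCast_add_one (i : ℕ) : node n L ↑(i + 1) = node n L (i + 1) := by
  rw [Nat.cast_succ]

lemma node_natCast_self (hn : 0 < n) : node n L n = L := by
  simp [node, (Nat.cast_pos.2 hn).ne']

lemma node_add_one_sub (hn : 0 < n) (t : ℝ) : node n L (t + 1) - node n L t = L / n := by
  have : (n : ℝ) ≠ 0 := (Nat.cast_pos.2 hn).ne'
  simp only [node]; field_simp; ring

lemma node_mono (hL : 0 ≤ L) {s t : ℝ} (h : s ≤ t) : node n L s ≤ node n L t := by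
  unfold node; gcongr

lemma node_lt_node_add_one (hn : 0 < n) (hL : 0 < L) (t : ℝ) : node n L t < node n L (t + 1) := by
  have := node_add_one_sub (L := L) hn t
  have : 0 < L / n := by positivity
  linarith

lemma node_nonneg (hL : 0 ≤ L) (i : ℕ) : 0 ≤ node n L i := by
  unfold node; positivity

lemma node_le (hn : 0 < n) (hL : 0 ≤ L) {i : ℕ} (hi : i ≤ n) : node n L i ≤ L := by
  simpa [node_natCast_self hn] using node_mono (n := n) hL (Nat.cast_le.2 hi)

lemma node_add_one_le (hn : 0 < n) (hL : 0 ≤ L) {i : ℕ} (hi : i < n) : node n L (i + 1) ≤ L := by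
  exact_mod_cast node_le hn hL (Nat.succ_le_of_lt hi)

lemma cellIndex_lt (hn : 0 < n) (x : ℝ) : cellIndex n L x < n := by
  have := min_le_left (n - 1) ⌊x * n / L⌋₊
  unfold cellIndex; omega

lemma cellIndex_eq (hn : 0 < n) (hL : 0 < L) {i : ℕ} (hi : i < n) {x : ℝ}
    (hx : x ∈ Ico (node n L i) (node n L (i + 1))) : cellIndex n L x = i := by
  have hn' : (0 : ℝ) < n := Nat.cast_pos.2 hn
  obtain ⟨h₁, h₂⟩ := hx
  simp only [node, div_le_iff₀ hn', lt_div_iff₀ hn'] at h₁ h₂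
  have hfloor : ⌊x * n / L⌋₊ = i := by
    rw [Nat.floor_eq_iff (div_nonneg (le_trans (by positivity) h₁) hL.le)]
    constructor
    · rw [le_div_iff₀ hL]; linarith
    · rw [div_lt_iff₀ hL]; linarith
  unfold cellIndex; rw [hfloor]; omega

lemma mem_Ico_cellIndex (hn : 0 < n) (hL : 0 < L) {x : ℝ} (hx : x ∈ Ico 0 L) :
    x ∈ Ico (node n L (cellIndex n L x)) (node n L (cellIndex n L x + 1)) := by
  have hn' : (0 : ℝ) < n := Nat.cast_pos.2 hn
  have hy : 0 ≤ x * n / L := by have := hx.1; positivity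
  have hlt : ⌊x * n / L⌋₊ < n := by
    rw [Nat.floor_lt hy, div_lt_iff₀ hL]; nlinarith [hx.2]
  have hidx : cellIndex n L x = ⌊x * n / L⌋₊ := min_eq_right (by omega)
  rw [hidx, mem_Ico, node, node, div_le_iff₀ hn', lt_div_iff₀ hn']
  constructor
  · have := Nat.floor_le hy
    rw [le_div_iff₀ hL] at this; linarith
  · have := Nat.lt_floor_add_one (x * n / L)
    rw [div_lt_iff₀ hL] at this; linarith

lemma exists_mem_Icc_node (hn : 0 < n) (hL : 0 < L) {x : ℝ} (hx : x ∈ Icc 0 L) :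
    ∃ i < n, x ∈ Icc (node n L i) (node n L (i + 1)) := by
  rcases hx.2.lt_or_eq with hlt | rfl
  · exact ⟨_, cellIndex_lt hn x, Ico_subset_Icc_self (mem_Ico_cellIndex hn hL ⟨hx.1, hlt⟩)⟩
  · refine ⟨n - 1, by omega, ?_, ?_⟩
    · exact_mod_cast node_le hn hL.le (Nat.sub_le n 1)
    · rw [show ((n - 1 : ℕ) : ℝ) + 1 = n by rw [Nat.cast_sub hn]; ring, node_natCast_self hn]

end Mesh

section Cellwise

variable {n : ℕ} {L : ℝ}

def CellwiseConst (n : ℕ) (L : ℝ) (f : ℝ → ℝ) : Prop :=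
  ∀ i < n, ∀ x ∈ Ico (node n L i) (node n L (i + 1)), f x = f (node n L i)

def CellwiseAffine (n : ℕ) (L : ℝ) (f : ℝ → ℝ) : Prop :=
  ∀ i < n, ∃ α β : ℝ, ∀ x ∈ Icc (node n L i) (node n L (i + 1)), f x = α * x + β

def CellwiseContinuous (n : ℕ) (L : ℝ) (f : ℝ → ℝ) : Prop :=
  ∀ i < n, ∃ g : ℝ → ℝ, Continuous g ∧ EqOn f g (Ioo (node n L i) (node n L (i + 1)))

lemma CellwiseConst.comp₂ {f g : ℝ → ℝ} (F : ℝ → ℝ → ℝ) (hf : CellwiseConst n L f)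
    (hg : CellwiseConst n L g) : CellwiseConst n L fun x => F (f x) (g x) :=
  fun i hi x hx => by simp only [hf i hi x hx, hg i hi x hx]

lemma CellwiseConst.comp {f : ℝ → ℝ} (F : ℝ → ℝ) (hf : CellwiseConst n L f) :
    CellwiseConst n L fun x => F (f x) :=
  hf.comp₂ (fun s _ => F s) hf

lemma CellwiseConst.cellwiseContinuous {f : ℝ → ℝ} (hf : CellwiseConst n L f) :
    CellwiseContinuous n L f :=
  fun i hi => ⟨fun _ => f (node n L i), continuous_const,
    fun x hx => hf i hi x (Ioo_subset_Ico_self hx)⟩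

lemma CellwiseAffine.cellwiseContinuous {f : ℝ → ℝ} (hf : CellwiseAffine n L f) :
    CellwiseContinuous n L f := fun i hi => by
  obtain ⟨α, β, h⟩ := hf i hi
  exact ⟨fun x => α * x + β, by fun_prop, fun x hx => h x (Ioo_subset_Icc_self hx)⟩

lemma CellwiseContinuous.comp₂ {f g : ℝ → ℝ} {F : ℝ → ℝ → ℝ} (hF : Continuous F.uncurry)
    (hf : CellwiseContinuous n L f) (hg : CellwiseContinuous n L g) :
    CellwiseContinuous n L fun x => F (f x) (g x) := fun i hi => by
  obtain ⟨f', hf', hff'⟩ := hf i hi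
  obtain ⟨g', hg', hgg'⟩ := hg i hi
  exact ⟨fun x => F (f' x) (g' x), hF.comp₂ hf' hg',
    fun x hx => by simp only [hff' hx, hgg' hx]⟩

lemma CellwiseContinuous.comp {f : ℝ → ℝ} {F : ℝ → ℝ} (hF : Continuous F)
    (hf : CellwiseContinuous n L f) : CellwiseContinuous n L fun x => F (f x) :=
  hf.comp₂ (F := fun s _ => F s) (hF.comp continuous_fst) hf

lemma CellwiseContinuous.add {f g : ℝ → ℝ} (hf : CellwiseContinuous n L f)
    (hg : CellwiseContinuous n L g) : CellwiseContinuous n L fun x => f x + g x :=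
  hf.comp₂ continuous_add hg

lemma CellwiseContinuous.sub {f g : ℝ → ℝ} (hf : CellwiseContinuous n L f)
    (hg : CellwiseContinuous n L g) : CellwiseContinuous n L fun x => f x - g x :=
  hf.comp₂ continuous_sub hg

lemma CellwiseContinuous.mul {f g : ℝ → ℝ} (hf : CellwiseContinuous n L f)
    (hg : CellwiseContinuous n L g) : CellwiseContinuous n L fun x => f x * g x :=
  hf.comp₂ continuous_mul hg

lemma CellwiseContinuous.div {f g : ℝ → ℝ} (hf : CellwiseContinuous n L f)
    (hg : CellwiseConst n L g) : CellwiseContinuous n L fun x => f x / g x := fun i hi => by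
  obtain ⟨f', hf', hff'⟩ := hf i hi
  exact ⟨fun x => f' x / g (node n L i), hf'.div_const _,
    fun x hx => by simp only [hff' hx, hg i hi x (Ioo_subset_Ico_self hx)]⟩

lemma CellwiseContinuous.intervalIntegrable (hn : 0 < n) (hL : 0 < L) {f : ℝ → ℝ}
    (hf : CellwiseContinuous n L f) : IntervalIntegrable f volume 0 L := by
  have hcells : ∀ k < n, IntervalIntegrable f volume (node n L k) (node n L ↑(k + 1)) :=
    fun k hk => by
      obtain ⟨g, hg, hfg⟩ := hf k hk
      refine (hg.intervalIntegrable _ _).congr_uIoo ?_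
      rw [uIoo_of_le (by exact_mod_cast (node_lt_node_add_one hn hL k).le)]
      exact_mod_cast hfg.symm
  simpa [node_natCast_self hn] using IntervalIntegrable.trans_iterate hcells

end Cellwise

section Integral

variable {a b : ℝ}

lemma ae_restrict_Ioc_of_forall_Ioo {P : ℝ → Prop} (h : ∀ x ∈ Ioo a b, P x) :
    ∀ᵐ x ∂volume.restrict (Ioc a b), P x :=
  (ae_restrict_congr_set (Ioo_ae_eq_Ioc (μ := volume))).1
    (ae_restrict_of_forall_mem measurableSet_Ioo h)

lemma integral_congr_Ioo (hab : a ≤ b) {f g : ℝ → ℝ} (h : EqOn f g (Ioo a b)) :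
    ∫ x in a..b, f x = ∫ x in a..b, g x :=
  integral_congr_uIoo (by rwa [uIoo_of_le hab])

lemma integral_nonneg_of_Ioo (hab : a ≤ b) {f : ℝ → ℝ} (h : ∀ x ∈ Ioo a b, 0 ≤ f x) :
    0 ≤ ∫ x in a..b, f x := by
  rw [integral_of_le hab]
  exact setIntegral_nonneg_of_ae_restrict (ae_restrict_Ioc_of_forall_Ioo h)

lemma ae_eq_zero_of_integral_eq_zero (hab : a ≤ b) {f : ℝ → ℝ}
    (hf : IntervalIntegrable f volume a b) (h₀ : ∀ x ∈ Ioo a b, 0 ≤ f x)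
    (h : ∫ x in a..b, f x = 0) : f =ᵐ[volume.restrict (Ioc a b)] 0 :=
  (integral_eq_zero_iff_of_le_of_nonneg_ae hab (ae_restrict_Ioc_of_forall_Ioo h₀) hf).1 h

end Integral

section Interpolation

variable {n : ℕ} {L : ℝ}

/-- The `i`-th summand rises linearly from `0` to `μ (i + 1) - μ i` across the `i`-th cell. -/
def interp (n : ℕ) (L : ℝ) (μ : ℕ → ℝ) (x : ℝ) : ℝ :=
  μ 0 + ∑ i ∈ Finset.range n,
    (μ (i + 1) - μ i) * (n / L) * (max (node n L i) (min (node n L (i + 1)) x) - node n L i)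

lemma continuous_interp (μ : ℕ → ℝ) : Continuous (interp n L μ) := by
  unfold interp; fun_prop

lemma interp_eq_of_mem (hn : 0 < n) (hL : 0 < L) (μ : ℕ → ℝ) {j : ℕ} (hj : j < n) {x : ℝ}
    (hx : x ∈ Icc (node n L j) (node n L (j + 1))) :
    interp n L μ x = μ j + (μ (j + 1) - μ j) * (n / L) * (x - node n L j) := by
  have hmono : ∀ {i k : ℕ}, i ≤ k → node n L i ≤ node n L k :=
    fun h => node_mono hL.le (Nat.cast_le.2 h)
  have hsplit : Finset.range n = Finset.range (j + 1) ∪ Finset.Ico (j + 1) n := by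
    rw [Finset.range_eq_Ico, Finset.range_eq_Ico, Finset.Ico_union_Ico_eq_Ico (by omega) hj]
  have hdisj : Disjoint (Finset.range (j + 1)) (Finset.Ico (j + 1) n) := by
    rw [Finset.range_eq_Ico]; exact Finset.Ico_disjoint_Ico_consecutive 0 (j + 1) n
  have hafter : ∀ i ∈ Finset.Ico (j + 1) n,
      (μ (i + 1) - μ i) * (n / L) * (max (node n L i) (min (node n L (i + 1)) x) - node n L i)
        = 0 := fun i hi => by
    have hxi : x ≤ node n L i := by
      have := hmono (Finset.mem_Ico.1 hi).1
      rw [node_natCast_add_one] at this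
      exact hx.2.trans this
    rw [min_eq_right (hxi.trans (node_lt_node_add_one hn hL i).le), max_eq_left hxi, sub_self,
      mul_zero]
  have hbefore : ∀ i ∈ Finset.range j,
      (μ (i + 1) - μ i) * (n / L) * (max (node n L i) (min (node n L (i + 1)) x) - node n L i)
        = μ (i + 1) - μ i := fun i hi => by
    have hix : node n L (i + 1) ≤ x := by
      simpa using (hmono (Finset.mem_range.1 hi)).trans hx.1
    rw [min_eq_left hix, max_eq_right (node_lt_node_add_one hn hL i).le, node_add_one_sub hn]
    field_simp
  unfold interp
  rw [hsplit, Finset.sum_union hdisj, Finset.sum_eq_zero hafter, add_zero, Finset.sum_range_succ,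
    Finset.sum_congr rfl hbefore, Finset.sum_range_sub, min_eq_right hx.2, max_eq_right hx.1]
  ring

lemma interp_node (hn : 0 < n) (hL : 0 < L) (μ : ℕ → ℝ) {j : ℕ} (hj : j ≤ n) :
    interp n L μ (node n L j) = μ j := by
  rcases hj.lt_or_eq with hj | hj
  · rw [interp_eq_of_mem hn hL μ hj ⟨le_rfl, (node_lt_node_add_one hn hL j).le⟩]
    ring
  · obtain ⟨k, rfl⟩ : ∃ k, j = k + 1 := ⟨j - 1, by omega⟩
    rw [node_natCast_add_one,
      interp_eq_of_mem hn hL μ (by omega) ⟨(node_lt_node_add_one hn hL k).le, le_rfl⟩,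
      node_add_one_sub hn]
    have : (n : ℝ) ≠ 0 := (Nat.cast_pos.2 hn).ne'
    field_simp
    ring

lemma interp_add (μ ν : ℕ → ℝ) :
    interp n L (μ + ν) = interp n L μ + interp n L ν := by
  ext x
  simp only [interp, Pi.add_apply]
  rw [add_add_add_comm, ← Finset.sum_add_distrib]
  exact congrArg _ (Finset.sum_congr rfl fun i _ => by ring)

lemma interp_smul (r : ℝ) (μ : ℕ → ℝ) : interp n L (r • μ) = r • interp n L μ := by
  ext x
  simp only [interp, Pi.smul_apply, smul_eq_mul]
  rw [mul_add, Finset.mul_sum]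
  exact congrArg _ (Finset.sum_congr rfl fun i _ => by ring)

lemma interp_congr {μ ν : ℕ → ℝ} (h : ∀ i ≤ n, μ i = ν i) : interp n L μ = interp n L ν := by
  ext x
  unfold interp
  rw [h 0 (Nat.zero_le n)]
  refine congrArg _ (Finset.sum_congr rfl fun i hi => ?_)
  have hi := Finset.mem_range.1 hi
  rw [h i hi.le, h (i + 1) hi]

lemma cellwiseAffine_interp (hn : 0 < n) (hL : 0 < L) (μ : ℕ → ℝ) :
    CellwiseAffine n L (interp n L μ) := fun i hi =>
  ⟨(μ (i + 1) - μ i) * (n / L), μ i - (μ (i + 1) - μ i) * (n / L) * node n L i,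
    fun x hx => by rw [interp_eq_of_mem hn hL μ hi hx]; ring⟩

lemma CellwiseAffine.eqOn_interp (hn : 0 < n) (hL : 0 < L) {f : ℝ → ℝ}
    (hf : CellwiseAffine n L f) : EqOn f (interp n L fun i => f (node n L i)) (Icc 0 L) := by
  intro x hx
  obtain ⟨j, hj, hxj⟩ := exists_mem_Icc_node hn hL hx
  obtain ⟨α, β, hαβ⟩ := hf j hj
  have hleft : node n L j ∈ Icc (node n L j) (node n L (j + 1)) :=
    ⟨le_rfl, (node_lt_node_add_one hn hL j).le⟩
  have hright : node n L (j + 1) ∈ Icc (node n L j) (node n L (j + 1)) :=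
    ⟨(node_lt_node_add_one hn hL j).le, le_rfl⟩
  have hslope : (α * node n L (j + 1) + β - (α * node n L j + β)) * (n / L) = α := by
    have : (n : ℝ) ≠ 0 := (Nat.cast_pos.2 hn).ne'
    rw [show α * node n L (j + 1) + β - (α * node n L j + β)
      = α * (node n L (j + 1) - node n L j) by ring, node_add_one_sub hn]
    field_simp
  rw [interp_eq_of_mem hn hL _ hj hxj, node_natCast_add_one, hαβ x hxj, hαβ _ hleft,
    hαβ _ hright, hslope]
  ring

end Interpolation

section BrokenDeriv

variable {n : ℕ} {L : ℝ}

def brokenDeriv (n : ℕ) (L : ℝ) (f : ℝ → ℝ) (x : ℝ) : ℝ :=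
  (f (node n L (cellIndex n L x + 1)) - f (node n L (cellIndex n L x))) * (n / L)

lemma brokenDeriv_eq_of_mem (hn : 0 < n) (hL : 0 < L) (f : ℝ → ℝ) {i : ℕ} (hi : i < n) {x : ℝ}
    (hx : x ∈ Ico (node n L i) (node n L (i + 1))) :
    brokenDeriv n L f x = (f (node n L (i + 1)) - f (node n L i)) * (n / L) := by
  rw [brokenDeriv, cellIndex_eq hn hL hi hx]

lemma cellwiseConst_brokenDeriv (hn : 0 < n) (hL : 0 < L) (f : ℝ → ℝ) :
    CellwiseConst n L (brokenDeriv n L f) := fun i hi x hx => by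
  rw [brokenDeriv_eq_of_mem hn hL f hi hx,
    brokenDeriv_eq_of_mem hn hL f hi ⟨le_rfl, node_lt_node_add_one hn hL i⟩]

lemma brokenDeriv_congr (hn : 0 < n) (hL : 0 < L) {f g : ℝ → ℝ} (h : EqOn f g (Icc 0 L)) :
    brokenDeriv n L f = brokenDeriv n L g := by
  ext x
  have hi := cellIndex_lt (L := L) hn x
  have hmem : ∀ t : ℝ, 0 ≤ t → node n L t ≤ L → node n L t ∈ Icc 0 L := fun t ht htL =>
    ⟨by unfold node; positivity, htL⟩
  rw [brokenDeriv, brokenDeriv, h (hmem _ (by positivity) (node_add_one_le hn hL.le hi)),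
    h (hmem _ (Nat.cast_nonneg _) (node_le hn hL.le hi.le))]

end BrokenDeriv

section Vanishing

variable {n : ℕ} {L : ℝ}

lemma CellwiseConst.eqOn_zero_of_integral_mul_self (hn : 0 < n) (hL : 0 < L) {f : ℝ → ℝ}
    (hf : CellwiseConst n L f) (h : ∫ x in (0 : ℝ)..L, f x * f x = 0) : EqOn f 0 (Ico 0 L) := by
  have hff : CellwiseConst n L fun x => f x * f x := hf.comp₂ (· * ·) hf
  have hae := ae_eq_zero_of_integral_eq_zero hL.le
    (hff.cellwiseContinuous.intervalIntegrable hn hL) (fun x _ => mul_self_nonneg (f x)) h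
  intro x hx
  set i := cellIndex n L x
  have hi : i < n := cellIndex_lt hn x
  have hxi := mem_Ico_cellIndex hn hL hx
  set a := node n L i
  set b := node n L (i + 1)
  have hab : a < b := node_lt_node_add_one hn hL i
  have hsub : Ioo a b ⊆ Ioc 0 L := fun y hy =>
    ⟨(node_nonneg hL.le i).trans_lt hy.1,
      hy.2.le.trans (node_add_one_le hn hL.le hi)⟩
  have hconst : EqOn (fun y => f y * f y) (fun _ => f a * f a) (Ioo a b) :=
    fun y hy => hff i hi y (Ioo_subset_Ico_self hy)
  have hzero := Measure.eqOn_open_of_ae_eq (ae_restrict_of_ae_restrict_of_subset hsub hae)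
    isOpen_Ioo (continuousOn_const.congr hconst) continuousOn_const
  have hmid : (a + b) / 2 ∈ Ioo a b := ⟨by linarith, by linarith⟩
  have : f a * f a = 0 := (hconst hmid).symm.trans (hzero hmid)
  rw [hf i hi x hxi]
  exact mul_self_eq_zero.1 this

lemma eqOn_zero_of_integral_eq_zero {a b : ℝ} (hab : a < b) {v w r : ℝ → ℝ}
    (hv : ContinuousOn v (Icc a b)) (hw : ∀ x ∈ Ioo a b, 0 < w x) (hr : ∀ x ∈ Ioo a b, 0 ≤ r x)
    (hint : IntervalIntegrable (fun x => w x * v x ^ 2 + r x) volume a b)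
    (h : ∫ x in a..b, (w x * v x ^ 2 + r x) = 0) : EqOn v 0 (Icc a b) := by
  have hae := ae_eq_zero_of_integral_eq_zero hab.le hint
    (fun x hx => by have := hw x hx; have := hr x hx; positivity) h
  have hv₀ : v =ᵐ[volume.restrict (Icc a b)] 0 := by
    refine (ae_restrict_congr_set (Ioc_ae_eq_Icc (μ := volume))).1 ?_
    filter_upwards [hae, ae_restrict_Ioc_of_forall_Ioo fun x hx => And.intro (hw x hx) (hr x hx)]
      with x hx ⟨hwx, hrx⟩
    have hsq : w x * v x ^ 2 = 0 := by
      have := mul_nonneg hwx.le (sq_nonneg (v x))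
      simp only [Pi.zero_apply] at hx
      linarith
    simpa [hwx.ne'] using hsq
  exact Measure.eqOn_Icc_of_ae_eq volume hab.ne hv₀ hv continuousOn_const

end Vanishing

lemma existsUnique_eq_of_anisotropic {K W : Type*} [Field K] [AddCommGroup W] [Module K W]
    [FiniteDimensional K W] (B : W →ₗ[K] W →ₗ[K] K) (hB : ∀ w, B w w = 0 → w = 0)
    (f : W →ₗ[K] K) : ∃! w, B w = f := by
  have hinj : Function.Injective B :=
    (injective_iff_map_eq_zero B).2 fun w hw => hB w (by rw [hw, LinearMap.zero_apply])
  obtain ⟨w, hw⟩ :=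
    (LinearMap.injective_iff_surjective_of_finrank_eq_finrank
      Subspace.dual_finrank_eq.symm).1 hinj f
  exact ⟨w, hw, fun w' hw' => hinj (hw'.trans hw.symm)⟩

section Network

variable {E : Type} {N : E → ℕ} {ℓ : E → ℝ}

lemma Dx_eq_brokenDeriv (v : E → ℝ → ℝ) (e : E) :
    Dx N ℓ v e = brokenDeriv (N e) (ℓ e) (v e) :=
  rfl

lemma Dx_add (u v : E → ℝ → ℝ) (e : E) (x : ℝ) :
    Dx N ℓ (u + v) e x = Dx N ℓ u e x + Dx N ℓ v e x := by
  simp only [Dx, Pi.add_apply]; ring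

lemma Dx_smul (r : ℝ) (u : E → ℝ → ℝ) (e : E) (x : ℝ) :
    Dx N ℓ (r • u) e x = r * Dx N ℓ u e x := by
  simp only [Dx, Pi.smul_apply, smul_eq_mul]; ring

lemma cellwiseConst_of_isPwConst {q : E → ℝ → ℝ} (hq : IsPwConst N ℓ q) (e : E) :
    CellwiseConst (N e) (ℓ e) (q e) :=
  hq e

lemma cellwiseAffine_of_isPwAffine {v : E → ℝ → ℝ} (hv : IsPwAffine N ℓ v) (e : E) :
    CellwiseAffine (N e) (ℓ e) (v e) :=
  hv.2 e

variable (hN : ∀ e, 0 < N e) (hℓ : ∀ e, 0 < ℓ e)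
include hN hℓ

lemma cellwiseContinuous_Dx (v : E → ℝ → ℝ) (e : E) :
    CellwiseContinuous (N e) (ℓ e) (Dx N ℓ v e) :=
  (cellwiseConst_brokenDeriv (hN e) (hℓ e) (v e)).cellwiseContinuous

lemma intervalIntegrable_pairing_integrand {P Q : ℝ → ℝ} {v : E → ℝ → ℝ} (e : E)
    (hP : CellwiseContinuous (N e) (ℓ e) P) (hQ : CellwiseContinuous (N e) (ℓ e) Q)
    (hv : CellwiseContinuous (N e) (ℓ e) (v e)) :
    IntervalIntegrable (fun x => P x * v e x + Q x * Dx N ℓ v e x) volume 0 (ℓ e) :=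
  ((hP.mul hv).add (hQ.mul (cellwiseContinuous_Dx hN hℓ v e))).intervalIntegrable (hN e) (hℓ e)

lemma cellwiseContinuous_momentum_coeffs {w₀ w₁ w₂ u : E → ℝ → ℝ}
    (hw₀ : ∀ e, CellwiseContinuous (N e) (ℓ e) (w₀ e))
    (hw₁ : ∀ e, CellwiseContinuous (N e) (ℓ e) (w₁ e))
    (hw₂ : ∀ e, CellwiseContinuous (N e) (ℓ e) (w₂ e))
    (hu : ∀ e, CellwiseContinuous (N e) (ℓ e) (u e)) (e : E) :
    CellwiseContinuous (N e) (ℓ e) (fun x => w₀ e x * u e x + w₁ e x * Dx N ℓ u e x) ∧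
      CellwiseContinuous (N e) (ℓ e) (fun x => w₂ e x * Dx N ℓ u e x - w₁ e x * u e x) :=
  ⟨((hw₀ e).mul (hu e)).add ((hw₁ e).mul (cellwiseContinuous_Dx hN hℓ u e)),
    ((hw₂ e).mul (cellwiseContinuous_Dx hN hℓ u e)).sub ((hw₁ e).mul (hu e))⟩

end Network

section Pairing

variable {E : Type} [Fintype E] {N : E → ℕ} {ℓ : E → ℝ}

variable (N ℓ) in
def gradPairing (P Q v : E → ℝ → ℝ) : ℝ :=
  ∑ e, ∫ x in (0 : ℝ)..ℓ e, (P e x * v e x + Q e x * Dx N ℓ v e x)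

variable (N ℓ) in
def momentumForm (w₀ w₁ w₂ u : E → ℝ → ℝ) : (E → ℝ → ℝ) → ℝ :=
  gradPairing N ℓ (fun e x => w₀ e x * u e x + w₁ e x * Dx N ℓ u e x)
    (fun e x => w₂ e x * Dx N ℓ u e x - w₁ e x * u e x)

lemma gradPairing_smul (P Q v : E → ℝ → ℝ) (r : ℝ) :
    gradPairing N ℓ P Q (r • v) = r * gradPairing N ℓ P Q v := by
  simp only [gradPairing, Finset.mul_sum, ← intervalIntegral.integral_const_mul]
  refine Finset.sum_congr rfl fun e _ => ?_
  congr 1; ext x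
  simp only [Pi.smul_apply, smul_eq_mul, Dx_smul]
  ring

lemma momentumForm_smul_left {w₀ w₁ w₂ : E → ℝ → ℝ} (r : ℝ) (u v : E → ℝ → ℝ) :
    momentumForm N ℓ w₀ w₁ w₂ (r • u) v = r * momentumForm N ℓ w₀ w₁ w₂ u v := by
  simp only [momentumForm, gradPairing, Finset.mul_sum, ← intervalIntegral.integral_const_mul]
  refine Finset.sum_congr rfl fun e _ => ?_
  congr 1; ext x
  simp only [Pi.smul_apply, smul_eq_mul, Dx_smul]
  ring

lemma momentumForm_self (w₀ w₁ w₂ u : E → ℝ → ℝ) :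
    momentumForm N ℓ w₀ w₁ w₂ u u
      = ∑ e, ∫ x in (0 : ℝ)..ℓ e, (w₀ e x * u e x ^ 2 + w₂ e x * Dx N ℓ u e x ^ 2) := by
  refine Finset.sum_congr rfl fun e _ => ?_
  congr 1; ext x
  ring

variable (hN : ∀ e, 0 < N e) (hℓ : ∀ e, 0 < ℓ e)
include hN hℓ

lemma gradPairing_add {P Q v w : E → ℝ → ℝ} (hP : ∀ e, CellwiseContinuous (N e) (ℓ e) (P e))
    (hQ : ∀ e, CellwiseContinuous (N e) (ℓ e) (Q e))
    (hv : ∀ e, CellwiseContinuous (N e) (ℓ e) (v e))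
    (hw : ∀ e, CellwiseContinuous (N e) (ℓ e) (w e)) :
    gradPairing N ℓ P Q (v + w) = gradPairing N ℓ P Q v + gradPairing N ℓ P Q w := by
  simp only [gradPairing, ← Finset.sum_add_distrib]
  refine Finset.sum_congr rfl fun e _ => ?_
  rw [← integral_add (intervalIntegrable_pairing_integrand hN hℓ e (hP e) (hQ e) (hv e))
    (intervalIntegrable_pairing_integrand hN hℓ e (hP e) (hQ e) (hw e))]
  congr 1; ext x
  simp only [Pi.add_apply, Dx_add]
  ring

lemma gradPairing_congr {P P' Q Q' v v' : E → ℝ → ℝ}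
    (hP : ∀ e, EqOn (P e) (P' e) (Ioo 0 (ℓ e))) (hQ : ∀ e, EqOn (Q e) (Q' e) (Ioo 0 (ℓ e)))
    (hv : ∀ e, EqOn (v e) (v' e) (Icc 0 (ℓ e))) :
    gradPairing N ℓ P Q v = gradPairing N ℓ P' Q' v' :=
  Finset.sum_congr rfl fun e _ => integral_congr_Ioo (hℓ e).le fun x hx => by
    simp only [Dx_eq_brokenDeriv, brokenDeriv_congr (hN e) (hℓ e) (hv e), hP e hx, hQ e hx,
      hv e (Ioo_subset_Icc_self hx)]

lemma momentumForm_congr {w₀ w₁ w₂ u u' v v' : E → ℝ → ℝ}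
    (hu : ∀ e, EqOn (u e) (u' e) (Icc 0 (ℓ e))) (hv : ∀ e, EqOn (v e) (v' e) (Icc 0 (ℓ e))) :
    momentumForm N ℓ w₀ w₁ w₂ u v = momentumForm N ℓ w₀ w₁ w₂ u' v' := by
  refine gradPairing_congr hN hℓ (fun e x hx => ?_) (fun e x hx => ?_) hv <;>
    simp only [Dx_eq_brokenDeriv, brokenDeriv_congr (hN e) (hℓ e) (hu e),
      hu e (Ioo_subset_Icc_self hx)]

lemma eqOn_zero_of_momentumForm_self_eq_zero {w₀ w₁ w₂ u : E → ℝ → ℝ}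
    (hw₀ : ∀ e, CellwiseContinuous (N e) (ℓ e) (w₀ e))
    (hw₂ : ∀ e, CellwiseContinuous (N e) (ℓ e) (w₂ e))
    (hw₀pos : ∀ e, ∀ x ∈ Ioo 0 (ℓ e), 0 < w₀ e x)
    (hw₂nonneg : ∀ e, ∀ x ∈ Ioo 0 (ℓ e), 0 ≤ w₂ e x)
    (hu : ∀ e, ContinuousOn (u e) (Icc 0 (ℓ e)))
    (hu' : ∀ e, CellwiseContinuous (N e) (ℓ e) (u e))
    (h : momentumForm N ℓ w₀ w₁ w₂ u u = 0) (e : E) : EqOn (u e) 0 (Icc 0 (ℓ e)) := by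
  have hnonneg : ∀ e ∈ Finset.univ,
      0 ≤ ∫ x in (0 : ℝ)..ℓ e, (w₀ e x * u e x ^ 2 + w₂ e x * Dx N ℓ u e x ^ 2) :=
    fun e _ => integral_nonneg_of_Ioo (hℓ e).le fun x hx => by
      have := hw₀pos e x hx; have := hw₂nonneg e x hx; positivity
  rw [momentumForm_self, Finset.sum_eq_zero_iff_of_nonneg hnonneg] at h
  have hDx := cellwiseContinuous_Dx hN hℓ u e
  refine eqOn_zero_of_integral_eq_zero (hℓ e) (hu e) (hw₀pos e)
    (fun x hx => by have := hw₂nonneg e x hx; positivity) ?_ (h e (Finset.mem_univ e))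
  refine ((((hw₀ e).mul ((hu' e).mul (hu' e))).add ((hw₂ e).mul (hDx.mul hDx))).intervalIntegrable
    (hN e) (hℓ e)).congr_uIoo fun x _ => ?_
  simp only [sq]

variable {w₀ w₁ w₂ : E → ℝ → ℝ} (hw₀ : ∀ e, CellwiseContinuous (N e) (ℓ e) (w₀ e))
  (hw₁ : ∀ e, CellwiseContinuous (N e) (ℓ e) (w₁ e))
  (hw₂ : ∀ e, CellwiseContinuous (N e) (ℓ e) (w₂ e))
include hw₀ hw₁ hw₂

lemma momentumForm_add_left {u₁ u₂ v : E → ℝ → ℝ}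
    (hu₁ : ∀ e, CellwiseContinuous (N e) (ℓ e) (u₁ e))
    (hu₂ : ∀ e, CellwiseContinuous (N e) (ℓ e) (u₂ e))
    (hv : ∀ e, CellwiseContinuous (N e) (ℓ e) (v e)) :
    momentumForm N ℓ w₀ w₁ w₂ (u₁ + u₂) v
      = momentumForm N ℓ w₀ w₁ w₂ u₁ v + momentumForm N ℓ w₀ w₁ w₂ u₂ v := by
  simp only [momentumForm, gradPairing, ← Finset.sum_add_distrib]
  refine Finset.sum_congr rfl fun e _ => ?_
  obtain ⟨hP₁, hQ₁⟩ := cellwiseContinuous_momentum_coeffs hN hℓ hw₀ hw₁ hw₂ hu₁ e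
  obtain ⟨hP₂, hQ₂⟩ := cellwiseContinuous_momentum_coeffs hN hℓ hw₀ hw₁ hw₂ hu₂ e
  rw [← integral_add (intervalIntegrable_pairing_integrand hN hℓ e hP₁ hQ₁ (hv e))
    (intervalIntegrable_pairing_integrand hN hℓ e hP₂ hQ₂ (hv e))]
  congr 1; ext x
  simp only [Pi.add_apply, Dx_add]
  ring

lemma momentumForm_add_right {u v₁ v₂ : E → ℝ → ℝ}
    (hu : ∀ e, CellwiseContinuous (N e) (ℓ e) (u e))
    (hv₁ : ∀ e, CellwiseContinuous (N e) (ℓ e) (v₁ e))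
    (hv₂ : ∀ e, CellwiseContinuous (N e) (ℓ e) (v₂ e)) :
    momentumForm N ℓ w₀ w₁ w₂ u (v₁ + v₂)
      = momentumForm N ℓ w₀ w₁ w₂ u v₁ + momentumForm N ℓ w₀ w₁ w₂ u v₂ :=
  gradPairing_add hN hℓ (fun e => (cellwiseContinuous_momentum_coeffs hN hℓ hw₀ hw₁ hw₂ hu e).1)
    (fun e => (cellwiseContinuous_momentum_coeffs hN hℓ hw₀ hw₁ hw₂ hu e).2) hv₁ hv₂

end Pairing

section NodalSpace

variable {V E : Type} {src dst : E → V} {N : E → ℕ} {ℓ : E → ℝ}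

variable (N) in
/-- As a space of functions on `ℝ`, `V_h` is infinite-dimensional (values off `[0, ℓ e]` are
unconstrained); its nodal values are the finite-dimensional coordinates. -/
abbrev NodalValues : Type := ∀ e, Fin (N e + 1) → ℝ

variable (N ℓ) in
def nodalInterp : NodalValues N →ₗ[ℝ] E → ℝ → ℝ where
  toFun μ e := interp (N e) (ℓ e) fun i => μ e ⟨min i (N e), Nat.lt_succ_of_le (min_le_right _ _)⟩
  map_add' _ _ := funext fun _ => interp_add _ _
  map_smul' r _ := funext fun _ => interp_smul r _

lemma nodalInterp_apply (μ : NodalValues N) (e : E) :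
    nodalInterp N ℓ μ e
      = interp (N e) (ℓ e) fun i => μ e ⟨min i (N e), Nat.lt_succ_of_le (min_le_right _ _)⟩ :=
  rfl

variable (N ℓ) in
def nodalValues (v : E → ℝ → ℝ) : NodalValues N :=
  fun e i => v e (node (N e) (ℓ e) i)

section

variable (hN : ∀ e, 0 < N e) (hℓ : ∀ e, 0 < ℓ e)
include hN hℓ

lemma nodalInterp_node (μ : NodalValues N) (e : E) (i : Fin (N e + 1)) :
    nodalInterp N ℓ μ e (node (N e) (ℓ e) i) = μ e i := by
  simp [nodalInterp_apply, interp_node (hN e) (hℓ e) _ i.is_le, min_eq_left i.is_le]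

lemma nodalValues_nodalInterp (μ : NodalValues N) : nodalValues N ℓ (nodalInterp N ℓ μ) = μ :=
  funext fun e => funext fun i => nodalInterp_node hN hℓ μ e i

lemma eqOn_nodalInterp_nodalValues {v : E → ℝ → ℝ} (hv : IsPwAffine N ℓ v) (e : E) :
    EqOn (v e) (nodalInterp N ℓ (nodalValues N ℓ v) e) (Icc 0 (ℓ e)) := by
  refine ((cellwiseAffine_of_isPwAffine hv e).eqOn_interp (hN e) (hℓ e)).trans fun x _ => ?_
  rw [nodalInterp_apply]
  refine congrFun (interp_congr fun i hi => ?_) x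
  simp [nodalValues, min_eq_left hi]

lemma isPwAffine_nodalInterp (μ : NodalValues N) : IsPwAffine N ℓ (nodalInterp N ℓ μ) :=
  ⟨fun e => by rw [nodalInterp_apply]; exact (continuous_interp _).continuousOn,
    fun e => by rw [nodalInterp_apply]; exact cellwiseAffine_interp (hN e) (hℓ e) _⟩

lemma cellwiseContinuous_nodalInterp (μ : NodalValues N) (e : E) :
    CellwiseContinuous (N e) (ℓ e) (nodalInterp N ℓ μ e) :=
  (cellwiseAffine_of_isPwAffine (isPwAffine_nodalInterp hN hℓ μ) e).cellwiseContinuous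

end

variable [Fintype E] [DecidableEq V]

variable (src dst ℓ) in
def vtxSumₗ : (E → ℝ → ℝ) →ₗ[ℝ] V → ℝ where
  toFun := vtxSum src dst ℓ
  map_add' f g := funext fun w => by
    simp only [vtxSum, Pi.add_apply, ← Finset.sum_add_distrib]
    exact Finset.sum_congr rfl fun e _ => by split_ifs <;> ring
  map_smul' r f := funext fun w => by
    simp only [vtxSum, Pi.smul_apply, smul_eq_mul, Finset.mul_sum, RingHom.id_apply]
    exact Finset.sum_congr rfl fun e _ => by split_ifs <;> ring

variable (src dst N ℓ) in
def nodalVh : Submodule ℝ (NodalValues N) :=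
  LinearMap.ker (vtxSumₗ src dst ℓ ∘ₗ nodalInterp N ℓ)

variable (hN : ∀ e, 0 < N e) (hℓ : ∀ e, 0 < ℓ e)
include hN hℓ

lemma mem_nodalVh_iff {μ : NodalValues N} :
    μ ∈ nodalVh src dst N ℓ ↔ InVh src dst N ℓ (nodalInterp N ℓ μ) :=
  LinearMap.mem_ker.trans
    ⟨fun h => ⟨isPwAffine_nodalInterp hN hℓ μ, congrFun h⟩, fun h => funext h.2⟩

lemma nodalValues_mem_nodalVh {v : E → ℝ → ℝ} (hv : InVh src dst N ℓ v) :
    nodalValues N ℓ v ∈ nodalVh src dst N ℓ := by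
  refine (mem_nodalVh_iff hN hℓ).2 ⟨isPwAffine_nodalInterp hN hℓ _, fun w => ?_⟩
  have hends : ∀ e, v e 0 = _ ∧ v e (ℓ e) = _ := fun e =>
    ⟨eqOn_nodalInterp_nodalValues hN hℓ hv.1 e ⟨le_rfl, (hℓ e).le⟩,
      eqOn_nodalInterp_nodalValues hN hℓ hv.1 e ⟨(hℓ e).le, le_rfl⟩⟩
  rw [← hv.2 w]
  simp only [vtxSum, (hends _).1, (hends _).2]

lemma momentum_solution_iff_nodal {w₀ w₁ w₂ G H m : E → ℝ → ℝ} (hm : InVh src dst N ℓ m) :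
    (∀ v, InVh src dst N ℓ v → momentumForm N ℓ w₀ w₁ w₂ m v = gradPairing N ℓ G H v) ↔
      ∀ ν ∈ nodalVh src dst N ℓ, momentumForm N ℓ w₀ w₁ w₂ (nodalInterp N ℓ (nodalValues N ℓ m))
        (nodalInterp N ℓ ν) = gradPairing N ℓ G H (nodalInterp N ℓ ν) := by
  have hm' := eqOn_nodalInterp_nodalValues hN hℓ hm.1
  constructor
  · intro h ν hν
    rw [← momentumForm_congr hN hℓ hm' fun _ => eqOn_refl _ _]
    exact h _ ((mem_nodalVh_iff hN hℓ).1 hν)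
  · intro h v hv
    have hv' := eqOn_nodalInterp_nodalValues hN hℓ hv.1
    rw [momentumForm_congr hN hℓ hm' hv',
      gradPairing_congr hN hℓ (fun _ => eqOn_refl _ _) (fun _ => eqOn_refl _ _) hv']
    exact h _ (nodalValues_mem_nodalVh hN hℓ hv)

lemma eq_zero_of_momentumForm_nodalInterp_self {w₀ w₁ w₂ : E → ℝ → ℝ}
    (hw₀ : ∀ e, CellwiseContinuous (N e) (ℓ e) (w₀ e))
    (hw₂ : ∀ e, CellwiseContinuous (N e) (ℓ e) (w₂ e))
    (hw₀pos : ∀ e, ∀ x ∈ Ioo 0 (ℓ e), 0 < w₀ e x)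
    (hw₂nonneg : ∀ e, ∀ x ∈ Ioo 0 (ℓ e), 0 ≤ w₂ e x) {μ : NodalValues N}
    (h : momentumForm N ℓ w₀ w₁ w₂ (nodalInterp N ℓ μ) (nodalInterp N ℓ μ) = 0) : μ = 0 :=
  funext fun e => funext fun i => by
    rw [← nodalInterp_node hN hℓ μ e i]
    exact eqOn_zero_of_momentumForm_self_eq_zero hN hℓ hw₀ hw₂ hw₀pos hw₂nonneg
      (isPwAffine_nodalInterp hN hℓ μ).1 (cellwiseContinuous_nodalInterp hN hℓ μ) h e
      ⟨node_nonneg (hℓ e).le i, node_le (hN e) (hℓ e).le i.is_le⟩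

theorem existsUnique_momentum_solution {w₀ w₁ w₂ G H : E → ℝ → ℝ}
    (hw₀ : ∀ e, CellwiseContinuous (N e) (ℓ e) (w₀ e))
    (hw₁ : ∀ e, CellwiseContinuous (N e) (ℓ e) (w₁ e))
    (hw₂ : ∀ e, CellwiseContinuous (N e) (ℓ e) (w₂ e))
    (hG : ∀ e, CellwiseContinuous (N e) (ℓ e) (G e))
    (hH : ∀ e, CellwiseContinuous (N e) (ℓ e) (H e))
    (hw₀pos : ∀ e, ∀ x ∈ Ioo 0 (ℓ e), 0 < w₀ e x)
    (hw₂nonneg : ∀ e, ∀ x ∈ Ioo 0 (ℓ e), 0 ≤ w₂ e x) :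
    ∃ m, InVh src dst N ℓ m ∧
      (∀ v, InVh src dst N ℓ v → momentumForm N ℓ w₀ w₁ w₂ m v = gradPairing N ℓ G H v) ∧
      ∀ m', InVh src dst N ℓ m' →
        (∀ v, InVh src dst N ℓ v → momentumForm N ℓ w₀ w₁ w₂ m' v = gradPairing N ℓ G H v) →
        ∀ e, EqOn (m' e) (m e) (Icc 0 (ℓ e)) := by
  set S := nodalVh src dst N ℓ
  have hI := cellwiseContinuous_nodalInterp hN hℓ
  let A : NodalValues N →ₗ[ℝ] NodalValues N →ₗ[ℝ] ℝ := LinearMap.mk₂ ℝ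
    (fun μ ν => momentumForm N ℓ w₀ w₁ w₂ (nodalInterp N ℓ μ) (nodalInterp N ℓ ν))
    (fun μ₁ μ₂ ν => by
      rw [map_add]; exact momentumForm_add_left hN hℓ hw₀ hw₁ hw₂ (hI μ₁) (hI μ₂) (hI ν))
    (fun r μ ν => by rw [map_smul]; exact momentumForm_smul_left r _ _)
    (fun μ ν₁ ν₂ => by
      rw [map_add]; exact momentumForm_add_right hN hℓ hw₀ hw₁ hw₂ (hI μ) (hI ν₁) (hI ν₂))
    (fun r μ ν => by rw [map_smul]; exact gradPairing_smul _ _ _ r)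
  let F : NodalValues N →ₗ[ℝ] ℝ :=
    { toFun := fun ν => gradPairing N ℓ G H (nodalInterp N ℓ ν)
      map_add' := fun ν₁ ν₂ => by rw [map_add]; exact gradPairing_add hN hℓ hG hH (hI ν₁) (hI ν₂)
      map_smul' := fun r ν => by rw [map_smul]; exact gradPairing_smul _ _ _ r }
  have hA : ∀ μ : S, A.domRestrict₁₂ S S μ μ = 0 → μ = 0 := fun μ h =>
    Subtype.ext (eq_zero_of_momentumForm_nodalInterp_self hN hℓ hw₀ hw₂ hw₀pos hw₂nonneg h)
  obtain ⟨μ, hμ, huniq⟩ := existsUnique_eq_of_anisotropic _ hA (F.domRestrict S)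
  have hsolves : ∀ m (hm : InVh src dst N ℓ m),
      (∀ v, InVh src dst N ℓ v → momentumForm N ℓ w₀ w₁ w₂ m v = gradPairing N ℓ G H v) ↔
        A.domRestrict₁₂ S S ⟨_, nodalValues_mem_nodalVh hN hℓ hm⟩ = F.domRestrict S :=
    fun m hm => (momentum_solution_iff_nodal hN hℓ hm).trans <| by
      rw [LinearMap.ext_iff, Subtype.forall]; rfl
  have hmμ : InVh src dst N ℓ (nodalInterp N ℓ μ) := (mem_nodalVh_iff hN hℓ).1 μ.2
  refine ⟨nodalInterp N ℓ μ, hmμ, (hsolves _ hmμ).2 ?_, fun m' hm' hsol e x hx => ?_⟩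
  · convert hμ
    exact nodalValues_nodalInterp hN hℓ μ
  · have hμ' : nodalValues N ℓ m' = μ := congrArg Subtype.val (huniq _ ((hsolves m' hm').1 hsol))
    rw [eqOn_nodalInterp_nodalValues hN hℓ hm'.1 e hx, hμ']

end NodalSpace

section Elimination

variable {n : ℕ} {L τ : ℝ}

lemma mass_integral_identity (hn : 0 < n) (hL : 0 < L) (hτ : τ ≠ 0) {ρ ρp D q : ℝ → ℝ}
    (hρ : CellwiseContinuous n L ρ) (hρp : CellwiseContinuous n L ρp)
    (hD : CellwiseContinuous n L D) (hq : CellwiseContinuous n L q) :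
    ∫ x in (0 : ℝ)..L, (ρ x - (ρp x - τ * D x)) * q x
      = τ * ((1 / τ) * (∫ x in (0 : ℝ)..L, ρ x * q x) + (∫ x in (0 : ℝ)..L, D x * q x)
        - (1 / τ) * ∫ x in (0 : ℝ)..L, ρp x * q x) := by
  have i₁ := (hρ.mul hq).intervalIntegrable hn hL
  have i₂ := (hD.mul hq).intervalIntegrable hn hL
  have i₃ := (hρp.mul hq).intervalIntegrable hn hL
  calc ∫ x in (0 : ℝ)..L, (ρ x - (ρp x - τ * D x)) * q x
      = ∫ x in (0 : ℝ)..L, (ρ x * q x - ρp x * q x + τ * (D x * q x)) := by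
        congr 1; ext x; ring
    _ = (∫ x in (0 : ℝ)..L, ρ x * q x) - (∫ x in (0 : ℝ)..L, ρp x * q x)
        + τ * ∫ x in (0 : ℝ)..L, D x * q x := by
        rw [integral_add (i₁.sub i₃) (i₂.const_mul τ), integral_sub i₁ i₃,
          intervalIntegral.integral_const_mul]
    _ = _ := by field_simp; ring

lemma momentum_integral_identity (hn : 0 < n) (hL : 0 < L) {r k₁ k₂ k₃ k₄ g ρp ρ m v : ℝ → ℝ}
    (hr : CellwiseContinuous n L r) (hk₁ : CellwiseContinuous n L k₁)
    (hk₂ : CellwiseContinuous n L k₂) (hk₃ : CellwiseContinuous n L k₃)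
    (hk₄ : CellwiseContinuous n L k₄) (hg : CellwiseContinuous n L g)
    (hρp : CellwiseContinuous n L ρp) (hm : CellwiseContinuous n L m)
    (hv : CellwiseContinuous n L v)
    (hρ : EqOn ρ (fun x => ρp x - τ * brokenDeriv n L m x) (Ioo 0 L)) :
    (1 / τ) * (∫ x in (0 : ℝ)..L, r x * m x * v x)
      - (∫ x in (0 : ℝ)..L,
          (k₁ x * m x + k₂ x * ρ x - k₃ x * brokenDeriv n L m x) * brokenDeriv n L v x)
      + (∫ x in (0 : ℝ)..L, (k₁ x * brokenDeriv n L m x + k₄ x * m x) * v x)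
      - (1 / τ) * (∫ x in (0 : ℝ)..L, g x * v x)
    = (∫ x in (0 : ℝ)..L, (((r x / τ + k₄ x) * m x + k₁ x * brokenDeriv n L m x) * v x
          + ((k₃ x + τ * k₂ x) * brokenDeriv n L m x - k₁ x * m x) * brokenDeriv n L v x))
      - ∫ x in (0 : ℝ)..L, (g x / τ * v x + k₂ x * ρp x * brokenDeriv n L v x) := by
  set Dm := brokenDeriv n L m
  set Dv := brokenDeriv n L v
  have hDm : CellwiseContinuous n L Dm := (cellwiseConst_brokenDeriv hn hL m).cellwiseContinuous
  have hDv : CellwiseContinuous n L Dv := (cellwiseConst_brokenDeriv hn hL v).cellwiseContinuous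
  have hτ : ∀ {f : ℝ → ℝ}, CellwiseContinuous n L f → CellwiseContinuous n L fun x => τ * f x :=
    CellwiseContinuous.comp (continuous_const_mul τ)
  have hdiv : ∀ {f : ℝ → ℝ}, CellwiseContinuous n L f → CellwiseContinuous n L fun x => f x / τ :=
    CellwiseContinuous.comp (continuous_id.div_const τ)
  have i₁ := ((hr.mul hm).mul hv).intervalIntegrable hn hL
  have i₂ := ((((hk₁.mul hm).add (hk₂.mul (hρp.sub (hτ hDm)))).sub (hk₃.mul hDm)).mul
    hDv).intervalIntegrable hn hL
  have i₃ := (((hk₁.mul hDm).add (hk₄.mul hm)).mul hv).intervalIntegrable hn hL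
  have i₄ := (hg.mul hv).intervalIntegrable hn hL
  have i₅ := (((((hdiv hr).add hk₄).mul hm).add (hk₁.mul hDm)).mul hv |>.add
    ((((hk₃.add (hτ hk₂)).mul hDm).sub (hk₁.mul hm)).mul hDv)).intervalIntegrable hn hL
  have i₆ := (((hdiv hg).mul hv).add ((hk₂.mul hρp).mul hDv)).intervalIntegrable hn hL
  have hρ' : ∫ x in (0 : ℝ)..L, (k₁ x * m x + k₂ x * ρ x - k₃ x * Dm x) * Dv x
      = ∫ x in (0 : ℝ)..L, (k₁ x * m x + k₂ x * (ρp x - τ * Dm x) - k₃ x * Dm x) * Dv x :=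
    integral_congr_Ioo hL.le fun x hx => by simp only [hρ hx]
  simp only [hρ', ← integral_sub i₅ i₆, ← intervalIntegral.integral_const_mul]
  rw [← integral_sub (i₁.const_mul _) i₂, ← integral_add ((i₁.const_mul _).sub i₂) i₃,
    ← integral_sub (((i₁.const_mul _).sub i₂).add i₃) (i₄.const_mul _)]
  congr 1; ext x
  ring

end Elimination

section NetworkElimination

variable {E : Type} [Fintype E] {N : E → ℕ} {ℓ : E → ℝ} {τ : ℝ}

lemma massEq_iff_density_eq (hN : ∀ e, 0 < N e) (hℓ : ∀ e, 0 < ℓ e) (hτ : τ ≠ 0)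
    {ρ ρp m : E → ℝ → ℝ} (hρ : IsPwConst N ℓ ρ) (hρp : IsPwConst N ℓ ρp) :
    (∀ q, IsPwConst N ℓ q →
        (1 / τ) * pairE ℓ ρ q + pairE ℓ (Dx N ℓ m) q = (1 / τ) * pairE ℓ ρp q) ↔
      ∀ e, EqOn (ρ e) (fun x => ρp e x - τ * Dx N ℓ m e x) (Ico 0 (ℓ e)) := by
  set r : E → ℝ → ℝ := fun e x => ρ e x - (ρp e x - τ * Dx N ℓ m e x)
  have hρ' := cellwiseConst_of_isPwConst hρ
  have hρp' := cellwiseConst_of_isPwConst hρp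
  have hDm e := cellwiseConst_brokenDeriv (hN e) (hℓ e) (m e)
  have hr : IsPwConst N ℓ r := fun e =>
    (hρ' e).comp₂ (fun s t => s - t) ((hρp' e).comp₂ (fun s t => s - τ * t) (hDm e))
  have hresidual : ∀ q, IsPwConst N ℓ q →
      ((1 / τ) * pairE ℓ ρ q + pairE ℓ (Dx N ℓ m) q = (1 / τ) * pairE ℓ ρp q ↔
        pairE ℓ r q = 0) := fun q hq => by
    have : pairE ℓ r q = τ * ((1 / τ) * pairE ℓ ρ q + pairE ℓ (Dx N ℓ m) q
        - (1 / τ) * pairE ℓ ρp q) := by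
      simp only [pairE, Finset.mul_sum, ← Finset.sum_add_distrib, ← Finset.sum_sub_distrib]
      exact Finset.sum_congr rfl fun e _ => mass_integral_identity (hN e) (hℓ e) hτ
        (hρ' e).cellwiseContinuous (hρp' e).cellwiseContinuous (hDm e).cellwiseContinuous
        (cellwiseConst_of_isPwConst hq e).cellwiseContinuous
    rw [this, mul_eq_zero, sub_eq_zero, or_iff_right hτ]
  constructor
  · intro h e x hx
    have hnonneg : ∀ e ∈ Finset.univ, 0 ≤ ∫ x in (0 : ℝ)..ℓ e, r e x * r e x := fun e _ =>
      integral_nonneg_of_Ioo (hℓ e).le fun x _ => mul_self_nonneg _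
    have hrr := (Finset.sum_eq_zero_iff_of_nonneg hnonneg).1 ((hresidual r hr).1 (h r hr)) e
      (Finset.mem_univ e)
    exact sub_eq_zero.1
      ((cellwiseConst_of_isPwConst hr e).eqOn_zero_of_integral_mul_self (hN e) (hℓ e) hrr hx)
  · intro h q hq
    refine (hresidual q hq).2 (Finset.sum_eq_zero fun e _ => ?_)
    rw [integral_congr_Ioo (hℓ e).le (g := fun _ => 0) fun x hx => by
      simp only [r, h e (Ioo_subset_Ico_self hx), sub_self, zero_mul]]
    exact integral_zero

lemma momentumEq_iff (hN : ∀ e, 0 < N e) (hℓ : ∀ e, 0 < ℓ e)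
    {r k₁ k₂ k₃ k₄ g ρp ρ m v : E → ℝ → ℝ}
    (hr : ∀ e, CellwiseContinuous (N e) (ℓ e) (r e))
    (hk₁ : ∀ e, CellwiseContinuous (N e) (ℓ e) (k₁ e))
    (hk₂ : ∀ e, CellwiseContinuous (N e) (ℓ e) (k₂ e))
    (hk₃ : ∀ e, CellwiseContinuous (N e) (ℓ e) (k₃ e))
    (hk₄ : ∀ e, CellwiseContinuous (N e) (ℓ e) (k₄ e))
    (hg : ∀ e, CellwiseContinuous (N e) (ℓ e) (g e))
    (hρp : ∀ e, CellwiseContinuous (N e) (ℓ e) (ρp e))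
    (hm : ∀ e, CellwiseContinuous (N e) (ℓ e) (m e))
    (hv : ∀ e, CellwiseContinuous (N e) (ℓ e) (v e))
    (hρ : ∀ e, EqOn (ρ e) (fun x => ρp e x - τ * Dx N ℓ m e x) (Ioo 0 (ℓ e))) :
    (1 / τ) * pairE ℓ (fun e x => r e x * m e x) v
        - pairE ℓ (fun e x => k₁ e x * m e x + k₂ e x * ρ e x - k₃ e x * Dx N ℓ m e x) (Dx N ℓ v)
        + pairE ℓ (fun e x => k₁ e x * Dx N ℓ m e x + k₄ e x * m e x) v
        = (1 / τ) * pairE ℓ g v ↔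
      momentumForm N ℓ (fun e x => r e x / τ + k₄ e x) k₁ (fun e x => k₃ e x + τ * k₂ e x) m v
        = gradPairing N ℓ (fun e x => g e x / τ) (fun e x => k₂ e x * ρp e x) v := by
  have key : (1 / τ) * pairE ℓ (fun e x => r e x * m e x) v
        - pairE ℓ (fun e x => k₁ e x * m e x + k₂ e x * ρ e x - k₃ e x * Dx N ℓ m e x) (Dx N ℓ v)
        + pairE ℓ (fun e x => k₁ e x * Dx N ℓ m e x + k₄ e x * m e x) v
        - (1 / τ) * pairE ℓ g v
      = momentumForm N ℓ (fun e x => r e x / τ + k₄ e x) k₁ (fun e x => k₃ e x + τ * k₂ e x) m v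
        - gradPairing N ℓ (fun e x => g e x / τ) (fun e x => k₂ e x * ρp e x) v := by
    simp only [pairE, momentumForm, gradPairing, Finset.mul_sum, ← Finset.sum_add_distrib,
      ← Finset.sum_sub_distrib]
    exact Finset.sum_congr rfl fun e _ => momentum_integral_identity (hN e) (hℓ e) (hr e) (hk₁ e)
      (hk₂ e) (hk₃ e) (hk₄ e) (hg e) (hρp e) (hm e) (hv e) (hρ e)
  rw [← sub_eq_zero, key, sub_eq_zero]

end NetworkElimination

section FixedPoint

variable {V E : Type} {src dst : E → V} {N : E → ℕ} {ℓ : E → ℝ} {γ : ℝ} {a b c : E → ℝ} {τ : ℝ}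
  {ρp mp ρl ml : E → ℝ → ℝ}

lemma cellwiseContinuous_fixedPt_coeffs (hρp : IsPwConst N ℓ ρp) (hmp : IsPwAffine N ℓ mp)
    (hρl : IsPwConst N ℓ ρl) (hml : IsPwAffine N ℓ ml) :
    (∀ e, CellwiseContinuous (N e) (ℓ e) (fun x => 1 / ρp e x)) ∧
      (∀ e, CellwiseContinuous (N e) (ℓ e) (fun x => ml e x / (2 * ρl e x ^ 2))) ∧
      (∀ e, CellwiseContinuous (N e) (ℓ e)
        (fun x => c e * γ / (γ - 1) * ρl e x ^ (γ - 1) / ρl e x)) ∧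
      (∀ e, CellwiseContinuous (N e) (ℓ e) (fun x => a e / ρl e x ^ 2)) ∧
      (∀ e, CellwiseContinuous (N e) (ℓ e) (fun x => b e * |ml e x| / ρl e x ^ 2)) ∧
      (∀ e, CellwiseContinuous (N e) (ℓ e)
        (fun x => 1 / ρp e x * mp e x + ml e x / (2 * ρl e x ^ 2) * (ρl e x - ρp e x))) := by
  have hρp' := cellwiseConst_of_isPwConst hρp
  have hρl' := cellwiseConst_of_isPwConst hρl
  have hml' e := (cellwiseAffine_of_isPwAffine hml e).cellwiseContinuous
  have hmp' e := (cellwiseAffine_of_isPwAffine hmp e).cellwiseContinuous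
  have hr e := ((hρp' e).comp fun t => 1 / t).cellwiseContinuous
  have hk₁ e := (hml' e).div ((hρl' e).comp fun t => 2 * t ^ 2)
  exact ⟨hr, hk₁,
    fun e => ((hρl' e).comp fun t => c e * γ / (γ - 1) * t ^ (γ - 1) / t).cellwiseContinuous,
    fun e => ((hρl' e).comp fun t => a e / t ^ 2).cellwiseContinuous,
    fun e => ((hml' e).comp (F := fun y => b e * |y|) (by fun_prop)).div
      ((hρl' e).comp fun t => t ^ 2),
    fun e => ((hr e).mul (hmp' e)).add
      ((hk₁ e).mul ((hρl' e).comp₂ (· - ·) (hρp' e)).cellwiseContinuous)⟩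

variable [Fintype E] [DecidableEq V]

variable (src dst N ℓ γ a b c τ ρp mp ρl ml) in
/-- The momentum equation of `FixedPtLin` after substituting `ρ = ρⁿ⁻¹ - τ ∂ₓ m`. -/
def ReducedMomentumEq (m : E → ℝ → ℝ) : Prop :=
  ∀ v, InVh src dst N ℓ v →
    momentumForm N ℓ (fun e x => 1 / ρp e x / τ + b e * |ml e x| / ρl e x ^ 2)
        (fun e x => ml e x / (2 * ρl e x ^ 2))
        (fun e x => a e / ρl e x ^ 2 + τ * (c e * γ / (γ - 1) * ρl e x ^ (γ - 1) / ρl e x)) m v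
      = gradPairing N ℓ
        (fun e x => (1 / ρp e x * mp e x + ml e x / (2 * ρl e x ^ 2) * (ρl e x - ρp e x)) / τ)
        (fun e x => c e * γ / (γ - 1) * ρl e x ^ (γ - 1) / ρl e x * ρp e x) v

lemma fixedPtLin_iff [Fintype V] (hN : ∀ e, 0 < N e) (hℓ : ∀ e, 0 < ℓ e) (hτ : τ ≠ 0)
    (hρp : IsPwConst N ℓ ρp) (hmp : IsPwAffine N ℓ mp) (hρl : IsPwConst N ℓ ρl)
    (hml : IsPwAffine N ℓ ml) {ρ m : E → ℝ → ℝ} (hρ : IsPwConst N ℓ ρ) (hm : IsPwAffine N ℓ m) :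
    FixedPtLin src dst N ℓ γ a b c τ ρp mp ρl ml ρ m ↔
      (∀ e, EqOn (ρ e) (fun x => ρp e x - τ * Dx N ℓ m e x) (Ico 0 (ℓ e))) ∧
        ReducedMomentumEq src dst N ℓ γ a b c τ ρp mp ρl ml m := by
  obtain ⟨hr, hk₁, hk₂, hk₃, hk₄, hg⟩ :=
    cellwiseContinuous_fixedPt_coeffs (γ := γ) (a := a) (b := b) (c := c) hρp hmp hρl hml
  rw [FixedPtLin, massEq_iff_density_eq hN hℓ hτ hρ hρp]
  refine and_congr_right fun hρeq => forall₂_congr fun v hv => ?_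
  exact momentumEq_iff hN hℓ hr hk₁ hk₂ hk₃ hk₄ hg
    (fun e => (cellwiseConst_of_isPwConst hρp e).cellwiseContinuous)
    (fun e => (cellwiseAffine_of_isPwAffine hm e).cellwiseContinuous)
    (fun e => (cellwiseAffine_of_isPwAffine hv.1 e).cellwiseContinuous)
    (fun e _ hx => hρeq e (Ioo_subset_Ico_self hx))

theorem existsUnique_reducedMomentumEq (hN : ∀ e, 0 < N e) (hℓ : ∀ e, 0 < ℓ e) (hγ : 1 < γ)
    (ha : ∀ e, 0 ≤ a e) (hb : ∀ e, 0 ≤ b e) (hc : ∀ e, 0 ≤ c e) (hτ : 0 < τ)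
    (hρp : IsPwConst N ℓ ρp) (hmp : IsPwAffine N ℓ mp) (hρl : IsPwConst N ℓ ρl)
    (hml : IsPwAffine N ℓ ml) (hρppos : ∀ e, ∀ x ∈ Ioo 0 (ℓ e), 0 < ρp e x)
    (hρlpos : ∀ e, ∀ x ∈ Ioo 0 (ℓ e), 0 < ρl e x) :
    ∃ m, InVh src dst N ℓ m ∧ ReducedMomentumEq src dst N ℓ γ a b c τ ρp mp ρl ml m ∧
      ∀ m', InVh src dst N ℓ m' → ReducedMomentumEq src dst N ℓ γ a b c τ ρp mp ρl ml m' →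
        ∀ e, EqOn (m' e) (m e) (Icc 0 (ℓ e)) := by
  obtain ⟨hr, hk₁, hk₂, hk₃, hk₄, hg⟩ :=
    cellwiseContinuous_fixedPt_coeffs (γ := γ) (a := a) (b := b) (c := c) hρp hmp hρl hml
  have hdiv := continuous_id.div_const τ
  exact existsUnique_momentum_solution hN hℓ (fun e => ((hr e).comp hdiv).add (hk₄ e)) hk₁
    (fun e => (hk₃ e).add ((hk₂ e).comp (continuous_const_mul τ))) (fun e => (hg e).comp hdiv)
    (fun e => (hk₂ e).mul (cellwiseConst_of_isPwConst hρp e).cellwiseContinuous)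
    (fun e x hx => by have := hρppos e x hx; have := hb e; positivity)
    (fun e x hx => by
      have := hρlpos e x hx; have := ha e; have := hc e; have := sub_pos.2 hγ; positivity)

end FixedPoint

end PipeNetwork

end

open PipeNetwork Set in
/-- **Well-posedness of the fixed-point iteration (Lemma 6.3).**
Let `τ > 0`, and let `(ρp, mp) ∈ Q_h × V_h` (the previous time step) and the
linearization point `(ρl, ml) ∈ Q_h × V_h` be given with `ρp > 0` and `ρl > 0`.
Then the linear system of the fixed-point iteration has a unique solution
`(ρ, m) ∈ Q_h × V_h` (uniqueness in the sense that any two solutions agree, on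
`[0, ℓ e)` for the piecewise-constant density component and on `[0, ℓ e]` for the
continuous flux component). -/
theorem fixed_point_iteration_wellposedness
    {V E : Type} [Fintype V] [Fintype E] [DecidableEq V]
    (src dst : E → V) (N : E → ℕ) (hN : ∀ e, 1 ≤ N e)
    (ℓ : E → ℝ) (hℓ : ∀ e, 0 < ℓ e)
    (γ : ℝ) (hγ : 1 < γ) (a b c : E → ℝ)
    (ha : ∀ e, 0 ≤ a e) (hb : ∀ e, 0 ≤ b e) (hc : ∀ e, 0 < c e)
    (τ : ℝ) (hτ : 0 < τ)
    (ρp mp : E → ℝ → ℝ) (hρp : IsPwConst N ℓ ρp) (hmp : InVh src dst N ℓ mp)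
    (ρl ml : E → ℝ → ℝ) (hρl : IsPwConst N ℓ ρl) (hml : InVh src dst N ℓ ml)
    (hppos : ∀ e, ∀ x ∈ Set.Icc 0 (ℓ e), 0 < ρp e x)
    (hlpos : ∀ e, ∀ x ∈ Set.Icc 0 (ℓ e), 0 < ρl e x) :
    ∃ ρ m : E → ℝ → ℝ,
      (IsPwConst N ℓ ρ ∧ InVh src dst N ℓ m ∧
        FixedPtLin src dst N ℓ γ a b c τ ρp mp ρl ml ρ m) ∧
      (∀ ρ' m' : E → ℝ → ℝ,
        IsPwConst N ℓ ρ' → InVh src dst N ℓ m' →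
        FixedPtLin src dst N ℓ γ a b c τ ρp mp ρl ml ρ' m' →
        ∀ e, (∀ x ∈ Set.Ico 0 (ℓ e), ρ' e x = ρ e x) ∧
             (∀ x ∈ Set.Icc 0 (ℓ e), m' e x = m e x)) := by
  have hτ₀ : τ ≠ 0 := hτ.ne'
  obtain ⟨m, hm, hmsol, huniq⟩ := existsUnique_reducedMomentumEq (src := src) (dst := dst) hN hℓ
    hγ ha hb (fun e => (hc e).le) hτ hρp hmp.1 hρl hml.1
    (fun e x hx => hppos e x (Ioo_subset_Icc_self hx))
    (fun e x hx => hlpos e x (Ioo_subset_Icc_self hx))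
  set ρ : E → ℝ → ℝ := fun e x => ρp e x - τ * Dx N ℓ m e x
  have hρ : IsPwConst N ℓ ρ := fun e => (cellwiseConst_of_isPwConst hρp e).comp₂
    (fun p d => p - τ * d) (cellwiseConst_brokenDeriv (hN e) (hℓ e) (m e))
  refine ⟨ρ, m, ⟨hρ, hm, (fixedPtLin_iff hN hℓ hτ₀ hρp hmp.1 hρl hml.1 hρ hm.1).2
    ⟨fun e x _ => rfl, hmsol⟩⟩, fun ρ' m' hρ' hm' hfix e => ?_⟩
  obtain ⟨hρ', hm'sol⟩ := (fixedPtLin_iff hN hℓ hτ₀ hρp hmp.1 hρl hml.1 hρ' hm'.1).1 hfix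
  have hm'm := huniq m' hm' hm'sol e
  refine ⟨fun x hx => ?_, hm'm⟩
  rw [hρ' e hx, Dx_eq_brokenDeriv, brokenDeriv_congr (hN e) (hℓ e) hm'm]
  rfl
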